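/- (Coherence of realizable patterns.) If an MSS Z contains a pattern P of size k, and 1 ≤ i < j < m ≤ k are indices with R_{i,j} = b, then R_{i,m} = b. -/
import Mathlib


/-- The two Allen-style temporal relations used: `b` = before, `c` = co-occurs. -/
inductive TRel : Type
  | b : TRel
  | c : TRel
deriving DecidableEq

/-- A state: a variable label together with an abstraction value. -/
structure TState (Ab Lab : Type*) where
  F : Lab
  V : Ab

/-- A state interval: a state together with start and end times `s ≤ e`. -/
structure StateInterval (Ab Lab : Type*) where
  F : Lab
  V : Ab
  s : ℝ
  e : ℝ
  hse : s ≤ e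

/-- A multivariate state sequence: a finite sequence of state intervals with
nondecreasing start times. -/
structure MSS (Ab Lab : Type*) where
  l : ℕ
  E : Fin l → StateInterval Ab Lab
  mono : ∀ i j : Fin l, i ≤ j → (E i).s ≤ (E j).s

/-- The temporal relation between two state intervals (the earlier one first):
`b` if the first ends strictly before the second starts, `c` otherwise. -/
noncomputable def irel {Ab Lab : Type*} (Ei Ej : StateInterval Ab Lab) : TRel :=
  if Ei.e < Ej.s then TRel.b else TRel.c

/-- A temporal pattern of size `k`: a sequence of `k` states together with a map
assigning a temporal relation to each pair of indices (only `i < j` is relevant). -/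
structure Pattern (Ab Lab : Type*) where
  k : ℕ
  S : Fin k → TState Ab Lab
  R : Fin k → Fin k → TRel

/-- `Z` contains `P`: there is a strictly increasing map matching the states of `P`
to state intervals of `Z` realizing the prescribed temporal relations. -/
def Contains {Ab Lab : Type*} (Z : MSS Ab Lab) (P : Pattern Ab Lab) : Prop :=
  ∃ π : Fin P.k → Fin Z.l, StrictMono π ∧
    (∀ i, (P.S i).F = (Z.E (π i)).F ∧ (P.S i).V = (Z.E (π i)).V) ∧
    (∀ i j : Fin P.k, i < j → irel (Z.E (π i)) (Z.E (π j)) = P.R i j)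

/-- `Q` is a subpattern of `P`: there is a strictly increasing index map preserving
states and the relations between pairs of indices. -/
def Subpattern {Ab Lab : Type*} (Q P : Pattern Ab Lab) : Prop :=
  ∃ σ : Fin Q.k → Fin P.k, StrictMono σ ∧
    (∀ i, Q.S i = P.S (σ i)) ∧
    (∀ i j : Fin Q.k, i < j → Q.R i j = P.R (σ i) (σ j))

/-- Coherence of realizable patterns: if Z contains P and i < j < m with R_{i,j} = b,
then R_{i,m} = b. -/
theorem coherence_of_contains {Ab Lab : Type*} (P : Pattern Ab Lab) (Z : MSS Ab Lab)
    (hZ : Contains Z P) (i j m : Fin P.k) (hij : i < j) (hjm : j < m)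
    (hb : P.R i j = TRel.b) : P.R i m = TRel.b := by
  obtain ⟨π, hmono, _, hrel⟩ := hZ
  have h1 := hrel i j hij
  have h2 := hrel i m (hij.trans hjm)
  rw [hb] at h1
  unfold irel at h1 h2
  split at h1
  · rename_i h
    have hs : (Z.E (π j)).s ≤ (Z.E (π m)).s := Z.mono _ _ (hmono hjm).le
    rw [if_pos (lt_of_lt_of_le h hs)] at h2
    exact h2.symm
  · simp at h1
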